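/- arXiv:2510.24216 — 2 statements merged into one kernel-verified Lean document; each statement's English description precedes it below -/
import Mathlib

section
/- Pinsker's inequality: for probability measures Q and P on a measurable space, the total variation distance satisfies TV(Q, P) ≤ sqrt(KL(Q‖P)/2). -/
/-!
The core is the pointwise bound `3 (x - 1)² ≤ (2x + 4) klFun x` for `x ≥ 0`, where
`klFun x = x log x + 1 - x`: the difference `g` vanishes at `1` and `g' = 4 h` with
`h x = (x + 1) log x - 2 (x - 1)`, which vanishes at `1` and has `h' = klFun x / x ≥ 0`,
so `g` decreases up to `1` and increases after it. For `f = dQ/dP`, Cauchy–Schwarz with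
weight `2f + 4` (of `P`-integral `6`) turns this into `(∫ |f - 1| dP)² ≤ 2 KL(Q‖P)`.
Finally `f - 1` has `P`-integral zero, so `Q(A) - P(A) = ∫_A (f - 1) dP = -∫_Aᶜ (f - 1) dP`
and `|Q(A) - P(A)| ≤ ½ ∫ |f - 1| dP`.
-/

open MeasureTheory InformationTheory Set Real

/-- Kullback–Leibler divergence `KL(Q‖P) = ∫ log(dQ/dP) dQ`. -/
noncomputable def klReal {α : Type*} [MeasurableSpace α] (Q P : Measure α) : ℝ :=
  ∫ x, Real.log ((Q.rnDeriv P x).toReal) ∂Q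

lemma hasDerivAt_add_one_mul_log_sub {x : ℝ} (hx : 0 < x) :
    HasDerivAt (fun y => (y + 1) * log y - 2 * (y - 1)) (klFun x / x) x := by
  have := (((hasDerivAt_id x).add_const 1).mul (hasDerivAt_log hx.ne')).sub
    (((hasDerivAt_id x).sub_const 1).const_mul 2)
  refine this.congr_deriv ?_
  rw [klFun_apply]
  field_simp
  simp only [id]
  ring

lemma monotoneOn_add_one_mul_log_sub :
    MonotoneOn (fun x => (x + 1) * log x - 2 * (x - 1)) (Ioi 0) := by
  refine monotoneOn_of_hasDerivWithinAt_nonneg (convex_Ioi 0)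
    (fun x hx => (hasDerivAt_add_one_mul_log_sub hx).continuousAt.continuousWithinAt)
    (fun x hx => (hasDerivAt_add_one_mul_log_sub (interior_subset hx)).hasDerivWithinAt)
    fun x hx => ?_
  rw [interior_Ioi] at hx
  exact div_nonneg (klFun_nonneg hx.out.le) hx.out.le

lemma hasDerivAt_mul_klFun_sub_sq {x : ℝ} (hx : 0 < x) :
    HasDerivAt (fun y => (2 * y + 4) * klFun y - 3 * (y - 1) ^ 2)
      (4 * ((x + 1) * log x - 2 * (x - 1))) x := by
  have := ((((hasDerivAt_id x).const_mul 2).add_const 4).mul (hasDerivAt_klFun hx.ne')).sub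
    ((((hasDerivAt_id x).sub_const 1).pow 2).const_mul 3)
  refine this.congr_deriv ?_
  simp only [id, klFun_apply]
  ring

theorem three_mul_sq_sub_one_le_mul_klFun {x : ℝ} (hx : 0 ≤ x) :
    3 * (x - 1) ^ 2 ≤ (2 * x + 4) * klFun x := by
  have hmin : IsMinOn (fun y => (2 * y + 4) * klFun y - 3 * (y - 1) ^ 2) (Ici 0) 1 := by
    have hcont : Continuous (fun y => (2 * y + 4) * klFun y - 3 * (y - 1) ^ 2) := by
      have := continuous_klFun; fun_prop
    have hpos : ∀ {y : ℝ}, y ∈ Ioo 0 1 ∪ Ioi 1 → 0 < y := by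
      rintro y (hy | hy)
      exacts [hy.1, zero_lt_one.trans hy]
    have hdiff : DifferentiableOn ℝ (fun y => (2 * y + 4) * klFun y - 3 * (y - 1) ^ 2)
        (Ioo 0 1 ∪ Ioi 1) := fun y hy =>
      (hasDerivAt_mul_klFun_sub_sq (hpos hy)).differentiableAt.differentiableWithinAt
    have hh1 : (1 + 1) * log 1 - 2 * (1 - 1) = (0 : ℝ) := by simp
    refine isMinOn_Ici_of_deriv hcont.continuousAt hcont.continuousAt
      (hdiff.mono subset_union_left) (hdiff.mono subset_union_right)
      (fun y hy => ?_) fun y hy => ?_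
    · rw [(hasDerivAt_mul_klFun_sub_sq hy.1).deriv]
      have := monotoneOn_add_one_mul_log_sub hy.1 (mem_Ioi.2 one_pos) hy.2.le
      simp only [hh1] at this
      linarith
    · rw [(hasDerivAt_mul_klFun_sub_sq (zero_lt_one.trans hy)).deriv]
      have := monotoneOn_add_one_mul_log_sub (mem_Ioi.2 one_pos)
        (mem_Ioi.2 (zero_lt_one.trans hy)) hy.out.le
      simp only [hh1] at this
      linarith
  have := hmin (mem_Ici.2 hx)
  simp [klFun_one] at this
  linarith

section Integral

variable {α : Type*} [MeasurableSpace α] {μ Q P : Measure α}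

theorem sq_integral_sqrt_mul_le {a b : α → ℝ} (ha0 : 0 ≤ᵐ[μ] a) (hb0 : 0 ≤ᵐ[μ] b)
    (ha : Integrable a μ) (hb : Integrable b μ) :
    (∫ x, √(a x * b x) ∂μ) ^ 2 ≤ (∫ x, a x ∂μ) * ∫ x, b x ∂μ := by
  have memLp_sqrt : ∀ {c : α → ℝ}, 0 ≤ᵐ[μ] c → Integrable c μ →
      MemLp (fun x => √(c x)) (ENNReal.ofReal 2) μ := fun {c} hc0 hc => by
    rw [ENNReal.ofReal_ofNat, memLp_two_iff_integrable_sq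
      hc.aestronglyMeasurable.aemeasurable.sqrt.aestronglyMeasurable]
    refine hc.congr ?_
    filter_upwards [hc0] with x hx using (sq_sqrt hx).symm
  have integral_sqrt_sq : ∀ {c : α → ℝ}, 0 ≤ᵐ[μ] c →
      ∫ x, √(c x) ^ (2 : ℝ) ∂μ = ∫ x, c x ∂μ := fun {c} hc0 => by
    refine integral_congr_ae ?_
    filter_upwards [hc0] with x hx
    rw [rpow_two, sq_sqrt hx]
  have hcs := integral_mul_le_Lp_mul_Lq_of_nonneg Real.HolderConjugate.two_two
    (ae_of_all _ fun x => sqrt_nonneg (a x)) (ae_of_all _ fun x => sqrt_nonneg (b x))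
    (memLp_sqrt ha0 ha) (memLp_sqrt hb0 hb)
  rw [integral_sqrt_sq ha0, integral_sqrt_sq hb0, ← sqrt_eq_rpow, ← sqrt_eq_rpow,
    ← sqrt_mul (integral_nonneg_of_ae ha0)] at hcs
  have hprod : ∫ x, √(a x * b x) ∂μ = ∫ x, √(a x) * √(b x) ∂μ := by
    refine integral_congr_ae ?_
    filter_upwards [ha0] with x hx using sqrt_mul hx _
  rw [← hprod] at hcs
  exact (le_sqrt (integral_nonneg fun x => sqrt_nonneg _)
    (mul_nonneg (integral_nonneg_of_ae ha0) (integral_nonneg_of_ae hb0))).1 hcs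

theorem abs_setIntegral_le_half_integral_abs {g : α → ℝ} (hg : Integrable g μ)
    (hg0 : ∫ x, g x ∂μ = 0) {s : Set α} (hs : MeasurableSet s) :
    |∫ x in s, g x ∂μ| ≤ (∫ x, |g x| ∂μ) / 2 := by
  have hcompl : ∫ x in sᶜ, g x ∂μ = -∫ x in s, g x ∂μ := by
    linarith [integral_add_compl hs hg]
  have := integral_add_compl hs hg.abs
  have h1 := abs_integral_le_integral_abs (f := g) (μ := μ.restrict s)
  have h2 := abs_integral_le_integral_abs (f := g) (μ := μ.restrict sᶜ)
  rw [hcompl, abs_neg] at h2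
  linarith

theorem sq_integral_abs_sub_one_le_two_mul_integral_klFun [IsProbabilityMeasure μ] {f : α → ℝ}
    (hf0 : ∀ᵐ x ∂μ, 0 ≤ f x) (hf : Integrable f μ) (hf1 : ∫ x, f x ∂μ = 1)
    (hkl : Integrable (fun x => klFun (f x)) μ) :
    (∫ x, |f x - 1| ∂μ) ^ 2 ≤ 2 * ∫ x, klFun (f x) ∂μ := by
  have hw : Integrable (fun x => 2 * f x + 4) μ := (hf.const_mul 2).add (integrable_const 4)
  have hw0 : ∀ᵐ x ∂μ, 0 < 2 * f x + 4 := hf0.mono fun x hx => by linarith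
  have hb0 : ∀ᵐ x ∂μ, 0 ≤ (f x - 1) ^ 2 / (2 * f x + 4) :=
    hw0.mono fun x hx => by positivity
  have hb_le : ∀ᵐ x ∂μ, (f x - 1) ^ 2 / (2 * f x + 4) ≤ klFun (f x) / 3 := by
    filter_upwards [hf0, hw0] with x hx hwx
    rw [div_le_div_iff₀ hwx three_pos]
    linarith [three_mul_sq_sub_one_le_mul_klFun hx]
  have hb : Integrable (fun x => (f x - 1) ^ 2 / (2 * f x + 4)) μ := by
    refine (hkl.div_const 3).mono' ?_ ?_
    · have hfm := hf.aestronglyMeasurable.aemeasurable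
      exact (((hfm.sub_const 1).pow_const 2).div
        ((hfm.const_mul 2).add_const 4)).aestronglyMeasurable
    · filter_upwards [hb_le, hb0] with x hle h0
      rwa [norm_of_nonneg h0]
  have hsqrt : ∀ᵐ x ∂μ, √((2 * f x + 4) * ((f x - 1) ^ 2 / (2 * f x + 4))) = |f x - 1| :=
    hw0.mono fun x hx => by rw [mul_div_cancel₀ _ hx.ne', sqrt_sq_eq_abs]
  have hcs := sq_integral_sqrt_mul_le (hw0.mono fun x hx => hx.le) hb0 hw hb
  rw [integral_congr_ae hsqrt, integral_add (hf.const_mul 2) (integrable_const 4),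
    integral_const_mul, hf1, integral_const] at hcs
  norm_num at hcs
  calc (∫ x, |f x - 1| ∂μ) ^ 2 ≤ 6 * ∫ x, (f x - 1) ^ 2 / (2 * f x + 4) ∂μ := hcs
    _ ≤ 6 * ∫ x, klFun (f x) / 3 ∂μ :=
      mul_le_mul_of_nonneg_left (integral_mono_ae hb (hkl.div_const 3) hb_le) (by norm_num)
    _ = 2 * ∫ x, klFun (f x) ∂μ := by rw [integral_div]; ring

theorem klReal_eq_integral_klFun [IsProbabilityMeasure Q] [IsProbabilityMeasure P]
    (hQP : Q ≪ P) (hint : Integrable (llr Q P) Q) :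
    klReal Q P = ∫ x, klFun (Q.rnDeriv P x).toReal ∂P := by
  rw [integral_klFun_rnDeriv hQP hint]
  simp [klReal, llr]

theorem setIntegral_toReal_rnDeriv_sub_one [IsFiniteMeasure Q] [IsFiniteMeasure P]
    (hQP : Q ≪ P) (s : Set α) :
    ∫ x in s, ((Q.rnDeriv P x).toReal - 1) ∂P = Q.real s - P.real s := by
  rw [integral_sub Measure.integrable_toReal_rnDeriv.integrableOn (integrable_const 1),
    Measure.setIntegral_toReal_rnDeriv hQP, setIntegral_const, smul_eq_mul, mul_one]

end Integral

/-- Pinsker's inequality: the total variation distance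
`TV(Q,P) = sup_A |Q(A) − P(A)|` satisfies `TV(Q, P) ≤ sqrt(KL(Q‖P)/2)`. -/
theorem stmt16 {α : Type*} [MeasurableSpace α] (Q P : Measure α)
    [IsProbabilityMeasure Q] [IsProbabilityMeasure P] (hQP : Q ≪ P)
    (hint : Integrable (fun x => Real.log ((Q.rnDeriv P x).toReal)) Q) :
    (⨆ A : {s : Set α // MeasurableSet s}, |(Q A.1).toReal - (P A.1).toReal|) ≤
      Real.sqrt (klReal Q P / 2) := by
  set f : α → ℝ := fun x => (Q.rnDeriv P x).toReal
  have hf : Integrable f P := Measure.integrable_toReal_rnDeriv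
  have hf1 : ∫ x, f x ∂P = 1 := by simp [f, Measure.integral_toReal_rnDeriv hQP]
  have hL1 : (∫ x, |f x - 1| ∂P) ^ 2 ≤ 2 * klReal Q P := by
    rw [klReal_eq_integral_klFun hQP hint]
    exact sq_integral_abs_sub_one_le_two_mul_integral_klFun
      (ae_of_all _ fun _ => ENNReal.toReal_nonneg) hf hf1
      ((integrable_klFun_rnDeriv_iff hQP).2 hint)
  refine Real.iSup_le (fun ⟨A, hA⟩ => abs_le_sqrt ?_) (sqrt_nonneg _)
  have hTV : |Q.real A - P.real A| ≤ (∫ x, |f x - 1| ∂P) / 2 := by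
    rw [← setIntegral_toReal_rnDeriv_sub_one hQP]
    refine abs_setIntegral_le_half_integral_abs (g := fun x => f x - 1)
      (hf.sub (integrable_const 1)) ?_ hA
    rw [integral_sub hf (integrable_const 1), hf1, integral_const]
    simp
  calc ((Q A).toReal - (P A).toReal) ^ 2 = |Q.real A - P.real A| ^ 2 := (sq_abs _).symm
    _ ≤ ((∫ x, |f x - 1| ∂P) / 2) ^ 2 := pow_le_pow_left₀ (abs_nonneg _) hTV 2
    _ ≤ klReal Q P / 2 := by linarith
end

section
/- High-probability conversion of the PAC-Bayes moment bound: if the random variable W = 2n·E_{θ∼Q}[(L(θ) − L_emp(θ))²] satisfies E_D E_{θ∼P}[exp(2n(L(θ) − L_emp(θ))²)] ≤ 2√n (Maurer's bound for [0,1]-valued losses), then by Markov's inequality and Donsker–Varadhan, with probability ≥ 1 − δ over D, for all posteriors Q: 2n·E_{θ∼Q}[(L(θ) − L_emp(θ))²] ≤ KL(Q‖P) + log(2√n/δ), which by Jensen's inequality implies E_{θ∼Q}[L(θ)] − E_{θ∼Q}[L_emp(θ)] ≤ sqrt((KL(Q‖P) + log(2√n/δ))/(2n)). -/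
open MeasureTheory

/-- Bounded measurable functions are integrable on finite measures. -/
lemma integrable_of_bdd {α : Type*} [MeasurableSpace α] {ν : Measure α} [IsFiniteMeasure ν]
    {h : α → ℝ} (hm : AEStronglyMeasurable h ν) {C : ℝ} (hb : ∀ x, |h x| ≤ C) :
    Integrable h ν :=
  (integrable_const C).mono' hm (Filter.Eventually.of_forall hb)

/-- Donsker–Varadhan style bound for a bounded measurable function. -/
lemma dv_bound {α : Type*} [MeasurableSpace α] (prior Q : Measure α)
    [IsProbabilityMeasure prior] [IsProbabilityMeasure Q]
    (hQP : Q ≪ prior) {F : α → ℝ} (hFmeas : Measurable F) {B : ℝ}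
    (hFB : ∀ t, |F t| ≤ B)
    (hlr : Integrable (fun t => Real.log ((Q.rnDeriv prior t).toReal)) Q)
    (hexpint : Integrable (fun t => Real.exp (F t)) prior) :
    ∫ t, F t ∂Q ≤ klReal Q prior + Real.log (∫ t, Real.exp (F t) ∂prior) := by
  set r : α → ℝ := fun t => (Q.rnDeriv prior t).toReal with hr
  have hrmeas : Measurable r := (Measure.measurable_rnDeriv Q prior).ennreal_toReal
  have hr0 : ∀ t, 0 ≤ r t := fun t => ENNReal.toReal_nonneg
  set φ : α → ℝ := fun t => F t - Real.log (r t) with hφ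
  have hφmeas : Measurable φ := hFmeas.sub hrmeas.log
  have hkey : ∀ t, r t * Real.exp (φ t) ≤ Real.exp (F t) ∧ 0 ≤ r t * Real.exp (φ t) := by
    intro t
    rcases (hr0 t).eq_or_lt with h | h
    · rw [← h, zero_mul]
      exact ⟨(Real.exp_pos _).le, le_rfl⟩
    · have hexp : Real.exp (φ t) = Real.exp (F t) / r t := by
        simp only [hφ, Real.exp_sub, Real.exp_log h]
      rw [hexp, mul_div_cancel₀ _ (ne_of_gt h)]
      exact ⟨le_rfl, (Real.exp_pos _).le⟩
  have hsmul_meas : Measurable fun t => r t * Real.exp (φ t) := hrmeas.mul hφmeas.exp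
  have hsmul_int : Integrable (fun t => r t * Real.exp (φ t)) prior := by
    refine hexpint.mono' hsmul_meas.aestronglyMeasurable ?_
    exact Filter.Eventually.of_forall fun t => by
      rw [Real.norm_eq_abs, abs_of_nonneg (hkey t).2]; exact (hkey t).1
  have hexpφ_int : Integrable (fun t => Real.exp (φ t)) Q := by
    rw [← MeasureTheory.integrable_rnDeriv_smul_iff hQP]
    simpa [smul_eq_mul] using hsmul_int
  set c := ∫ t, Real.exp (φ t) ∂Q with hc
  have hc_eq : c = ∫ t, r t * Real.exp (φ t) ∂prior := by
    rw [hc, ← MeasureTheory.integral_rnDeriv_smul hQP]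
    simp [smul_eq_mul]
    rfl
  have hc_pos : 0 < c := integral_exp_pos hexpφ_int
  have hcg : c ≤ ∫ t, Real.exp (F t) ∂prior := by
    rw [hc_eq]
    exact integral_mono hsmul_int hexpint fun t => (hkey t).1
  have hF_int_Q : Integrable F Q := integrable_of_bdd hFmeas.aestronglyMeasurable hFB
  have hφ_int : Integrable φ Q := hF_int_Q.sub hlr
  have hDV : ∫ t, φ t ∂Q ≤ Real.log c := by
    have hpt : ∀ t, φ t ≤ Real.exp (φ t) / c + (Real.log c - 1) := by
      intro t
      have h2 := Real.log_le_sub_one_of_pos (div_pos (Real.exp_pos (φ t)) hc_pos)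
      rw [Real.log_div (Real.exp_pos _).ne' hc_pos.ne', Real.log_exp] at h2
      linarith
    have hint2 : Integrable (fun t => Real.exp (φ t) / c + (Real.log c - 1)) Q :=
      (hexpφ_int.div_const c).add (integrable_const _)
    calc ∫ t, φ t ∂Q ≤ ∫ t, (Real.exp (φ t) / c + (Real.log c - 1)) ∂Q :=
          integral_mono hφ_int hint2 hpt
      _ = c / c + (Real.log c - 1) := by
          rw [integral_add (hexpφ_int.div_const c) (integrable_const _),
            integral_div, integral_const]
          simp
          rfl
      _ = Real.log c := by rw [div_self hc_pos.ne']; ring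
  have hsplit : ∫ t, F t ∂Q = ∫ t, φ t ∂Q + klReal Q prior := by
    rw [klReal, ← integral_add hφ_int hlr]
    congr 1; funext t; simp [hφ, hr]
  have hlog : Real.log c ≤ Real.log (∫ t, Real.exp (F t) ∂prior) :=
    Real.log_le_log hc_pos hcg
  rw [hsplit]
  linarith

/-- High-probability conversion of the PAC-Bayes moment bound: if Maurer's exponential
moment bound `E_D E_{θ∼P}[exp(2n(L(θ) − L_emp(θ))²)] ≤ 2√n` holds for a `[0,1]`-valued
loss, then with probability at least `1 − δ` over the sample, for all posteriors `Q ≪ P`: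
`2n·E_{θ∼Q}[(L(θ) − L_emp(θ))²] ≤ KL(Q‖P) + log(2√n/δ)`, and consequently
`E_{θ∼Q}[L(θ)] − E_{θ∼Q}[L_emp(θ)] ≤ sqrt((KL(Q‖P) + log(2√n/δ))/(2n))`. -/
theorem stmt19 {Θ Z : Type*} [MeasurableSpace Θ] [MeasurableSpace Z]
    (prior : Measure Θ) [IsProbabilityMeasure prior]
    (μ : Measure Z) [IsProbabilityMeasure μ]
    (n : ℕ) (hn : 0 < n)
    (ℓ : Θ → Z → ℝ) (hmeas : Measurable (Function.uncurry ℓ))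
    (hbound : ∀ t z, ℓ t z ∈ Set.Icc (0 : ℝ) 1)
    (hMaurer : ∫ d, ∫ t, Real.exp (2 * n *
          ((∫ z, ℓ t z ∂μ) - (1 / (n : ℝ)) * ∑ i : Fin n, ℓ t (d i)) ^ 2) ∂prior
        ∂(Measure.pi fun _ : Fin n => μ) ≤ 2 * Real.sqrt n)
    (δ : ℝ) (hδ : δ ∈ Set.Ioo (0 : ℝ) 1) :
    (Measure.pi fun _ : Fin n => μ)
      {d | ∀ Q : Measure Θ, IsProbabilityMeasure Q → Q ≪ prior →
        Integrable (fun t => Real.log ((Q.rnDeriv prior t).toReal)) Q →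
        (2 * n * ∫ t, ((∫ z, ℓ t z ∂μ) - (1 / (n : ℝ)) * ∑ i : Fin n, ℓ t (d i)) ^ 2 ∂Q
            ≤ klReal Q prior + Real.log (2 * Real.sqrt n / δ)) ∧
        (∫ t, (∫ z, ℓ t z ∂μ) ∂Q) - (∫ t, (1 / (n : ℝ)) * ∑ i : Fin n, ℓ t (d i) ∂Q)
          ≤ Real.sqrt ((klReal Q prior + Real.log (2 * Real.sqrt n / δ)) / (2 * n))}
      ≥ ENNReal.ofReal (1 - δ) := by
  obtain ⟨hδ0, hδ1⟩ := hδ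
  have hn' : (0 : ℝ) < n := by exact_mod_cast hn
  have hsqrt : 0 < Real.sqrt n := Real.sqrt_pos.mpr hn'
  set P : Measure (Fin n → Z) := Measure.pi fun _ : Fin n => μ with hP
  set L : Θ → ℝ := fun t => ∫ z, ℓ t z ∂μ with hL
  set Emp : (Fin n → Z) → Θ → ℝ := fun d t => (1 / (n : ℝ)) * ∑ i : Fin n, ℓ t (d i) with hEmp
  set F : (Fin n → Z) → Θ → ℝ := fun d t => 2 * (n : ℝ) * (L t - Emp d t) ^ 2 with hF
  -- measurability
  have hL_meas : Measurable L :=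
    (hmeas.stronglyMeasurable.integral_prod_right' (ν := μ)).measurable
  have hℓt_meas : ∀ i : Fin n, Measurable fun p : (Fin n → Z) × Θ => ℓ p.2 (p.1 i) := fun i =>
    hmeas.comp (measurable_snd.prodMk ((measurable_pi_apply i).comp measurable_fst))
  have hEmp_meas2 : Measurable fun p : (Fin n → Z) × Θ => Emp p.1 p.2 := by
    apply Measurable.const_mul
    exact Finset.measurable_sum _ fun i _ => hℓt_meas i
  have hF_meas2 : Measurable fun p : (Fin n → Z) × Θ => F p.1 p.2 := by
    apply Measurable.const_mul
    exact ((hL_meas.comp measurable_snd).sub hEmp_meas2).pow_const 2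
  have hF_meas : ∀ d, Measurable (F d) := fun d =>
    hF_meas2.comp (measurable_const.prodMk measurable_id)
  have hEmp_meas : ∀ d, Measurable (Emp d) := fun d =>
    hEmp_meas2.comp (measurable_const.prodMk measurable_id)
  -- bounds
  have hL01 : ∀ t, L t ∈ Set.Icc (0 : ℝ) 1 := by
    intro t
    have hint : Integrable (fun z => ℓ t z) μ := by
      refine integrable_of_bdd ?_ (C := 1) ?_
      · exact (hmeas.comp (measurable_const.prodMk measurable_id)).aestronglyMeasurable
      · intro z
        rcases hbound t z with ⟨h1, h2⟩
        rw [abs_le]; constructor <;> linarith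
    constructor
    · exact integral_nonneg fun z => (hbound t z).1
    · calc L t ≤ ∫ _, (1 : ℝ) ∂μ := integral_mono hint (integrable_const 1) fun z => (hbound t z).2
        _ = 1 := by simp
  have hEmp01 : ∀ d t, Emp d t ∈ Set.Icc (0 : ℝ) 1 := by
    intro d t
    have hs0 : 0 ≤ ∑ i : Fin n, ℓ t (d i) := Finset.sum_nonneg fun i _ => (hbound _ _).1
    have hs1 : ∑ i : Fin n, ℓ t (d i) ≤ (n : ℝ) := by
      calc ∑ i : Fin n, ℓ t (d i) ≤ ∑ _i : Fin n, (1 : ℝ) :=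
            Finset.sum_le_sum fun i _ => (hbound _ _).2
        _ = (n : ℝ) := by simp
    constructor
    · exact mul_nonneg (by positivity) hs0
    · have := mul_le_mul_of_nonneg_left hs1 (le_of_lt (by positivity : (0:ℝ) < 1 / (n:ℝ)))
      calc Emp d t ≤ (1 / (n : ℝ)) * (n : ℝ) := this
        _ = 1 := by field_simp
  have hF_bd : ∀ d t, 0 ≤ F d t ∧ F d t ≤ 2 * (n : ℝ) := by
    intro d t
    obtain ⟨hl0, hl1⟩ := hL01 t
    obtain ⟨he0, he1⟩ := hEmp01 d t
    have hsq : (L t - Emp d t) ^ 2 ≤ 1 := by nlinarith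
    constructor
    · simp only [hF]; positivity
    · simp only [hF]; nlinarith
  have hFabs : ∀ d t, |F d t| ≤ 2 * (n : ℝ) := fun d t => by
    rw [abs_of_nonneg (hF_bd d t).1]; exact (hF_bd d t).2
  -- the exponential moment function
  set g : (Fin n → Z) → ℝ := fun d => ∫ t, Real.exp (F d t) ∂prior with hg
  have hg_meas : Measurable g :=
    ((Real.measurable_exp.comp hF_meas2).stronglyMeasurable.integral_prod_right'
      (ν := prior)).measurable
  have hexpF_int : ∀ d, Integrable (fun t => Real.exp (F d t)) prior := fun d => by
    refine integrable_of_bdd (Real.measurable_exp.comp (hF_meas d)).aestronglyMeasurable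
      (C := Real.exp (2 * (n : ℝ))) fun t => ?_
    rw [abs_of_pos (Real.exp_pos _)]
    exact Real.exp_le_exp.mpr (hF_bd d t).2
  have hg_nonneg : ∀ d, 0 ≤ g d := fun d => integral_nonneg fun t => (Real.exp_pos _).le
  have hg_one : ∀ d, 1 ≤ g d := fun d => by
    calc (1 : ℝ) = ∫ _, (1 : ℝ) ∂prior := by simp
      _ ≤ g d := integral_mono (integrable_const 1) (hexpF_int d)
          fun t => Real.one_le_exp (hF_bd d t).1
  have hg_bd : ∀ d, g d ≤ Real.exp (2 * (n : ℝ)) := fun d => by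
    calc g d ≤ ∫ _, Real.exp (2 * (n : ℝ)) ∂prior :=
          integral_mono (hexpF_int d) (integrable_const _)
            fun t => Real.exp_le_exp.mpr (hF_bd d t).2
      _ = Real.exp (2 * (n : ℝ)) := by simp
  have hg_int : Integrable g P := by
    refine integrable_of_bdd hg_meas.aestronglyMeasurable (C := Real.exp (2 * (n : ℝ)))
      fun d => ?_
    rw [abs_of_nonneg (hg_nonneg d)]; exact hg_bd d
  set ε := 2 * Real.sqrt n / δ with hε
  have hε_pos : 0 < ε := div_pos (by linarith) hδ0
  have hbadmeas : MeasurableSet {d | ε ≤ g d} := measurableSet_le measurable_const hg_meas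
  have hint_eq : ∫ d, g d ∂P ≤ 2 * Real.sqrt n := by
    have := hMaurer
    simp only [hP, hg, hF, hL, hEmp] at this ⊢
    exact this
  have hmarkov :=
    mul_meas_ge_le_integral_of_nonneg (μ := P) (Filter.Eventually.of_forall hg_nonneg) hg_int ε
  have hPbad : P {d | ε ≤ g d} ≤ ENNReal.ofReal δ := by
    have h2 : ε * (P {d | ε ≤ g d}).toReal ≤ 2 * Real.sqrt n := le_trans hmarkov hint_eq
    have h3 : 2 * Real.sqrt n * (P {d | ε ≤ g d}).toReal ≤ 2 * Real.sqrt n * δ := by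
      rw [hε, div_mul_eq_mul_div] at h2
      exact (div_le_iff₀ hδ0).mp h2
    have h4 : (P {d | ε ≤ g d}).toReal ≤ δ :=
      le_of_mul_le_mul_left h3 (by linarith)
    rw [← ENNReal.ofReal_toReal (measure_ne_top P _)]
    exact ENNReal.ofReal_le_ofReal h4
  -- inclusion of the good event in the target set
  have hsub : {d | ε ≤ g d}ᶜ ⊆
      {d | ∀ Q : Measure Θ, IsProbabilityMeasure Q → Q ≪ prior →
        Integrable (fun t => Real.log ((Q.rnDeriv prior t).toReal)) Q →
        (2 * n * ∫ t, ((∫ z, ℓ t z ∂μ) - (1 / (n : ℝ)) * ∑ i : Fin n, ℓ t (d i)) ^ 2 ∂Q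
            ≤ klReal Q prior + Real.log (2 * Real.sqrt n / δ)) ∧
        (∫ t, (∫ z, ℓ t z ∂μ) ∂Q) - (∫ t, (1 / (n : ℝ)) * ∑ i : Fin n, ℓ t (d i) ∂Q)
          ≤ Real.sqrt ((klReal Q prior + Real.log (2 * Real.sqrt n / δ)) / (2 * n))} := by
    intro d hd
    have hdε : g d < ε := not_le.mp hd
    intro Q hQprob hQac hQint
    haveI := hQprob
    -- Donsker–Varadhan
    have hdv := dv_bound prior Q hQac (hF_meas d) (hFabs d) hQint (hexpF_int d)
    have hg_pos : 0 < g d := lt_of_lt_of_le one_pos (hg_one d)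
    have hlogg : Real.log (g d) ≤ Real.log ε := Real.log_le_log hg_pos hdε.le
    have hΔsq_int : Integrable (fun t => (L t - Emp d t) ^ 2) Q := by
      refine integrable_of_bdd ((hL_meas.sub (hEmp_meas d)).pow_const 2).aestronglyMeasurable
        (C := 1) fun t => ?_
      obtain ⟨hl0, hl1⟩ := hL01 t
      obtain ⟨he0, he1⟩ := hEmp01 d t
      rw [abs_le]; constructor <;> nlinarith
    have hFQ : ∫ t, F d t ∂Q = 2 * (n : ℝ) * ∫ t, (L t - Emp d t) ^ 2 ∂Q := by
      simp only [hF]; exact integral_const_mul _ _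
    have part1 : 2 * (n : ℝ) * ∫ t, (L t - Emp d t) ^ 2 ∂Q
        ≤ klReal Q prior + Real.log ε := by
      rw [← hFQ]
      linarith
    constructor
    · exact part1
    · -- Jensen step
      have hL_int_Q : Integrable L Q := by
        refine integrable_of_bdd hL_meas.aestronglyMeasurable (C := 1) fun t => ?_
        obtain ⟨hl0, hl1⟩ := hL01 t
        rw [abs_le]; constructor <;> linarith
      have hEmp_int_Q : Integrable (Emp d) Q := by
        refine integrable_of_bdd (hEmp_meas d).aestronglyMeasurable (C := 1) fun t => ?_
        obtain ⟨he0, he1⟩ := hEmp01 d t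
        rw [abs_le]; constructor <;> linarith
      have hΔ_int : Integrable (fun t => L t - Emp d t) Q := hL_int_Q.sub hEmp_int_Q
      set m := ∫ t, (L t - Emp d t) ∂Q with hm
      have hm_eq : (∫ t, L t ∂Q) - ∫ t, Emp d t ∂Q = m := (integral_sub hL_int_Q hEmp_int_Q).symm
      have hvar : m ^ 2 ≤ ∫ t, (L t - Emp d t) ^ 2 ∂Q := by
        have h0 : 0 ≤ ∫ t, (L t - Emp d t - m) ^ 2 ∂Q := integral_nonneg fun t => sq_nonneg _
        have hfun : (fun t => (L t - Emp d t - m) ^ 2)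
            = fun t => ((L t - Emp d t) ^ 2 - (2 * m) * (L t - Emp d t)) + m ^ 2 := by
          funext t; ring
        have hint_cm : Integrable (fun t => (2 * m) * (L t - Emp d t)) Q :=
          hΔ_int.const_mul (2 * m)
        have hint1 : Integrable
            (fun t => (L t - Emp d t) ^ 2 - (2 * m) * (L t - Emp d t)) Q :=
          hΔsq_int.sub hint_cm
        rw [hfun, integral_add hint1 (integrable_const _),
          integral_sub hΔsq_int hint_cm, integral_const_mul,
          integral_const] at h0
        simp only [measure_univ, probReal_univ, ENNReal.toReal_one, smul_eq_mul, one_mul, ← hm] at h0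
        nlinarith
      have hΔsq_le : ∫ t, (L t - Emp d t) ^ 2 ∂Q
          ≤ (klReal Q prior + Real.log ε) / (2 * (n : ℝ)) := by
        rw [le_div_iff₀ (by positivity)]
        linarith
      calc (∫ t, L t ∂Q) - ∫ t, Emp d t ∂Q = m := hm_eq
        _ ≤ |m| := le_abs_self m
        _ = Real.sqrt (m ^ 2) := (Real.sqrt_sq_eq_abs m).symm
        _ ≤ Real.sqrt ((klReal Q prior + Real.log ε) / (2 * (n : ℝ))) :=
            Real.sqrt_le_sqrt (hvar.trans hΔsq_le)
  -- conclude with Markov's inequality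
  refine le_trans ?_ (measure_mono hsub)
  have hcompl : P {d | ε ≤ g d}ᶜ = 1 - P {d | ε ≤ g d} := prob_compl_eq_one_sub hbadmeas
  rw [hcompl]
  calc ENNReal.ofReal (1 - δ) = 1 - ENNReal.ofReal δ := by
        rw [ENNReal.ofReal_sub _ hδ0.le, ENNReal.ofReal_one]
    _ ≤ 1 - P {d | ε ≤ g d} := tsub_le_tsub_left hPbad 1
end
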